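/- arXiv:1909.05500 — 6 statements merged into one kernel-verified Lean document; each statement's English description precedes it below -/
import Mathlib

section
/- For every nonnegative integer k, ∑_{l=0}^{k} 1/((l+1)²(k+1-l)²) ≤ (4π²/3) · 1/(k+1)². -/
/-!
Writing `a = l + 1`, `b = k + 1 - l`, so that `a + b = k + 2`, each term is
`((1/a + 1/b) / (a + b))² ≤ 2 (1/a² + 1/b²) / (k + 2)²`. Both halves of the resulting sum are
partial sums of the Basel series, hence at most `π²/6`, which leaves `(2π²/3) / (k + 2)²`.
-/

open Finset Real

lemma sum_range_one_div_add_one_sq_le (n : ℕ) :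
    ∑ l ∈ range n, (1 : ℝ) / ((l : ℝ) + 1) ^ 2 ≤ π ^ 2 / 6 := by
  have hBasel := sum_le_hasSum (range (n + 1)) (fun _ _ ↦ by positivity) hasSum_zeta_two
  -- the `0`-th term of the Basel series is the junk value `1 / 0 = 0`
  simpa [sum_range_succ'] using hBasel

lemma sum_range_sub_eq_sum_range_add_one {M : Type*} [AddCommMonoid M] (f : ℝ → M) (n : ℕ) :
    ∑ l ∈ range n, f ((n : ℝ) - l) = ∑ l ∈ range n, f ((l : ℝ) + 1) := by
  rw [← sum_range_reflect]
  refine sum_congr rfl fun l hl ↦ congrArg f ?_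
  have hl : l < n := mem_range.mp hl
  rw [Nat.cast_sub (by omega : l ≤ n - 1), Nat.cast_sub (by omega : 1 ≤ n)]
  ring

lemma one_div_sq_mul_sq_le {a b : ℝ} (ha : 0 < a) (hb : 0 < b) :
    1 / (a ^ 2 * b ^ 2) ≤ 2 / (a + b) ^ 2 * (1 / a ^ 2 + 1 / b ^ 2) := by
  calc 1 / (a ^ 2 * b ^ 2) = (1 / a + 1 / b) ^ 2 / (a + b) ^ 2 := by field_simp; ring
    _ ≤ 2 * ((1 / a) ^ 2 + (1 / b) ^ 2) / (a + b) ^ 2 := by gcongr; exact add_sq_le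
    _ = 2 / (a + b) ^ 2 * (1 / a ^ 2 + 1 / b ^ 2) := by ring

open Real in
theorem stmt_3 (k : ℕ) :
    ∑ l ∈ Finset.range (k + 1),
      (1 : ℝ) / (((l : ℝ) + 1) ^ 2 * ((k : ℝ) + 1 - l) ^ 2)
      ≤ (4 * π ^ 2 / 3) * (1 / ((k : ℝ) + 1) ^ 2) := by
  have hreflect := sum_range_sub_eq_sum_range_add_one (fun x : ℝ ↦ 1 / x ^ 2) (k + 1)
  push_cast at hreflect
  calc ∑ l ∈ range (k + 1), (1 : ℝ) / (((l : ℝ) + 1) ^ 2 * ((k : ℝ) + 1 - l) ^ 2)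
      ≤ ∑ l ∈ range (k + 1),
          2 / ((k : ℝ) + 2) ^ 2 * (1 / ((l : ℝ) + 1) ^ 2 + 1 / ((k : ℝ) + 1 - l) ^ 2) := by
        refine sum_le_sum fun l hl ↦ ?_
        have hlk : (l : ℝ) < k + 1 := by exact_mod_cast mem_range.mp hl
        have hterm := one_div_sq_mul_sq_le (a := (l : ℝ) + 1) (b := (k : ℝ) + 1 - l)
          (by positivity) (by linarith)
        rwa [show (l : ℝ) + 1 + ((k : ℝ) + 1 - l) = k + 2 by ring] at hterm
    _ = 2 / ((k : ℝ) + 2) ^ 2 * (2 * ∑ l ∈ range (k + 1), 1 / ((l : ℝ) + 1) ^ 2) := by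
        rw [← mul_sum, sum_add_distrib, hreflect, two_mul]
    _ ≤ 2 / ((k : ℝ) + 2) ^ 2 * (2 * (π ^ 2 / 6)) := by
        gcongr; exact sum_range_one_div_add_one_sq_le _
    _ = (2 * π ^ 2 / 3) * (1 / ((k : ℝ) + 2) ^ 2) := by ring
    _ ≤ (4 * π ^ 2 / 3) * (1 / ((k : ℝ) + 1) ^ 2) := by
        gcongr <;> linarith
end

section
/- Let A be an N×N Hermitian positive definite matrix with smallest eigenvalue at least 1/κ and largest eigenvalue at most 1 (κ ≥ 1), let |b⟩ be a unit vector, and Q_b = I - |b⟩⟨b|. For f ∈ [0,1], every nonzero eigenvalue λ of Q_b((1-f)I + fA)²Q_b satisfies λ ≥ (1 - f + f/κ)². -/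
/-!
Write `B = (1 - f) I + f A` and `c = 1 - f + f / κ ≥ 0`. Since `A ≥ I / κ` in the Loewner order,
`B - c I = f (A - I / κ) ≥ 0`, and then `B² - c² I = (B - c I)² + 2c (B - c I) ≥ 0`.
An eigenvector `v` of `M = Q B² Q` with nonzero eigenvalue lies in the range of the projection
`Q`, so its eigenvalue is `⟨v, B² v⟩ ≥ c²`.
-/

namespace Matrix

open scoped MatrixOrder ComplexOrder

variable {n 𝕜 : Type*} [RCLike 𝕜]

lemma star_dotProduct_self_eq_sum_norm_sq [Fintype n] (v : n → 𝕜) :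
    star v ⬝ᵥ v = ((∑ i, ‖v i‖ ^ 2 : ℝ) : 𝕜) := by
  simp [dotProduct, RCLike.conj_mul]

lemma isHermitian_one_sub_vecMulVec [DecidableEq n] (b : n → 𝕜) :
    (1 - vecMulVec b (star b)).IsHermitian := by
  simp [IsHermitian, conjTranspose_sub]

lemma isIdempotentElem_one_sub_vecMulVec [Fintype n] [DecidableEq n] {b : n → 𝕜}
    (hb : star b ⬝ᵥ b = 1) : IsIdempotentElem (1 - vecMulVec b (star b)) :=
  IsIdempotentElem.one_sub <| by rw [IsIdempotentElem, vecMulVec_mul_vecMulVec, hb, one_smul]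

lemma IsHermitian.posSemidef_sub_smul_one [Fintype n] [DecidableEq n] {A : Matrix n n 𝕜}
    (hA : A.IsHermitian) {c : ℝ} (h : ∀ i, c ≤ hA.eigenvalues i) :
    (A - (c : 𝕜) • 1).PosSemidef := by
  rw [← le_iff, ← RCLike.real_smul_eq_coe_smul, ← Algebra.algebraMap_eq_smul_one,
    algebraMap_le_iff_le_spectrum hA.isSelfAdjoint, hA.spectrum_real_eq_range_eigenvalues]
  rintro _ ⟨i, rfl⟩
  exact h i

lemma PosSemidef.sq_sub_smul_one [Fintype n] [DecidableEq n] {B : Matrix n n 𝕜} {c : ℝ}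
    (hc : 0 ≤ c) (hB : (B - (c : 𝕜) • 1).PosSemidef) :
    (B ^ 2 - ((c ^ 2 : ℝ) : 𝕜) • 1).PosSemidef := by
  obtain ⟨D, rfl⟩ : ∃ D, B = D + (c : 𝕜) • 1 := ⟨B - (c : 𝕜) • 1, by abel⟩
  rw [add_sub_cancel_right] at hB
  have h : (D + (c : 𝕜) • 1) ^ 2 - ((c ^ 2 : ℝ) : 𝕜) • 1 = Dᴴ * D + (2 * c) • D := by
    rw [hB.isHermitian.eq]
    simp only [sq, add_mul, mul_add, mul_smul_one, smul_one_mul]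
    push_cast
    module
  rw [h]
  exact (posSemidef_conjTranspose_mul_self D).add (hB.smul (by positivity))

lemma IsHermitian.star_eigenvectorBasis_dotProduct_self [Fintype n] [DecidableEq n]
    {M : Matrix n n 𝕜} (hM : M.IsHermitian) (i : n) :
    star ⇑(hM.eigenvectorBasis i) ⬝ᵥ ⇑(hM.eigenvectorBasis i) = 1 := by
  rw [dotProduct_comm, ← EuclideanSpace.inner_eq_star_dotProduct, inner_self_eq_norm_sq_to_K,
    hM.eigenvectorBasis.orthonormal.1 i]
  simp

lemma IsHermitian.mulVec_eigenvectorBasis_of_mul_eq [Fintype n] [DecidableEq n]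
    {P M : Matrix n n 𝕜} (hM : M.IsHermitian) (hPM : P * M = M) {i : n}
    (hi : hM.eigenvalues i ≠ 0) :
    P *ᵥ ⇑(hM.eigenvectorBasis i) = ⇑(hM.eigenvectorBasis i) := by
  have h : P *ᵥ (M *ᵥ hM.eigenvectorBasis i) = M *ᵥ hM.eigenvectorBasis i := by
    rw [mulVec_mulVec, hPM]
  rw [hM.mulVec_eigenvectorBasis, mulVec_smul] at h
  exact smul_right_injective _ hi h

lemma IsHermitian.le_eigenvalues_of_eq_mul_mul [Fintype n] [DecidableEq n]
    {Q C M : Matrix n n 𝕜} {c : ℝ} (hM : M.IsHermitian) (hQ : Q.IsHermitian)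
    (hQQ : IsIdempotentElem Q) (hC : (C - (c : 𝕜) • 1).PosSemidef) (hMQ : M = Q * C * Q) {i : n}
    (hi : hM.eigenvalues i ≠ 0) : c ≤ hM.eigenvalues i := by
  set v := ⇑(hM.eigenvectorBasis i)
  have hQv : Q *ᵥ v = v :=
    hM.mulVec_eigenvectorBasis_of_mul_eq (by rw [hMQ, ← mul_assoc, ← mul_assoc, hQQ.eq]) hi
  have hMv : star v ⬝ᵥ (M *ᵥ v) = star v ⬝ᵥ (C *ᵥ v) := by
    rw [hMQ, ← mulVec_mulVec, hQv, ← mulVec_mulVec, dotProduct_mulVec, ← hQ.eq, ← star_mulVec,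
      hQv]
  have hCv := hC.re_dotProduct_nonneg v
  rw [sub_mulVec, dotProduct_sub, smul_mulVec, one_mulVec, dotProduct_smul,
    hM.star_eigenvectorBasis_dotProduct_self i, ← hMv] at hCv
  simpa [hM.eigenvalues_eq i] using hCv

end Matrix

open Matrix
open scoped ComplexOrder

theorem stmt_10 (N : ℕ) (κ f : ℝ) (hκ : 1 ≤ κ) (hf : f ∈ Set.Icc (0:ℝ) 1)
    (A : Matrix (Fin N) (Fin N) ℂ) (hA : A.IsHermitian)
    (hspec : ∀ i, 1 / κ ≤ hA.eigenvalues i ∧ hA.eigenvalues i ≤ 1)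
    (b : Fin N → ℂ) (hb : ∑ i, ‖b i‖ ^ 2 = 1)
    (Q : Matrix (Fin N) (Fin N) ℂ) (hQ : Q = 1 - Matrix.vecMulVec b (star b))
    (M : Matrix (Fin N) (Fin N) ℂ)
    (hM : M = Q * (((1 - f : ℝ) : ℂ) • (1 : Matrix (Fin N) (Fin N) ℂ) + ((f : ℝ) : ℂ) • A) ^ 2 * Q)
    (hMh : M.IsHermitian) :
    ∀ i, hMh.eigenvalues i ≠ 0 → (1 - f + f / κ) ^ 2 ≤ hMh.eigenvalues i := by
  obtain ⟨hf0, hf1⟩ := hf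
  have hc : 0 ≤ 1 - f + f / κ := by
    have := div_nonneg hf0 (zero_le_one.trans hκ)
    linarith
  set B := ((1 - f : ℝ) : ℂ) • (1 : Matrix (Fin N) (Fin N) ℂ) + ((f : ℝ) : ℂ) • A
  have hBκ : B - ((1 - f + f / κ : ℝ) : ℂ) • 1 = f • (A - ((1 / κ : ℝ) : ℂ) • 1) := by
    rw [← Complex.coe_smul]
    push_cast
    module
  have hB : (B - ((1 - f + f / κ : ℝ) : ℂ) • 1).PosSemidef :=
    hBκ ▸ (hA.posSemidef_sub_smul_one fun i ↦ (hspec i).1).smul hf0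
  have hb' : star b ⬝ᵥ b = 1 := by
    rw [star_dotProduct_self_eq_sum_norm_sq, hb]
    norm_num
  intro i hi
  subst hQ
  exact hMh.le_eigenvalues_of_eq_mul_mul (isHermitian_one_sub_vecMulVec b)
    (isIdempotentElem_one_sub_vecMulVec hb') (hB.sq_sub_smul_one hc) hM hi
end

section
/- Let f(s) = c_e^{-1} ∫₀^s exp(-1/(t(1-t))) dt with c_e = ∫₀¹ exp(-1/(t(1-t))) dt. Then for every k ≥ 1 and 0 < s < 1, |f^{(k)}(s)| ≤ (4e/c_e) · exp(-1/(s(1-s))) · (2/(s(1-s)))^{2(k-1)} · (k!)²/(k+1)². -/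
/-!
Write `a = s(1-s)`. The function `t ↦ exp(-1/(t(1-t)))` extends holomorphically to
`φ(z) = exp(-1/(z(1-z)))` away from `z(1-z) = 0`. On the circle `|z - s| = a²/4` the quantity
`z(1-z)` stays within `a²/2` of `a`, so `Re(1/(z(1-z))) ≥ 1/a - 1` and `|φ(z)| ≤ e·exp(-1/a)`.
Cauchy's estimate on that circle bounds the `n`-th derivative of `g` at `s` by
`n! · e·exp(-1/a) · (2/a)^(2n)`, and `f^(n+1) = c_e⁻¹ g^(n)` near `s`. Finally
`n! ≤ 4((n+1)!)²/(n+2)²`.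
-/

open Metric Set Filter Topology MeasureTheory

noncomputable def cexpBump (z : ℂ) : ℂ := Complex.exp (-(1 / (z * (1 - z))))

lemma differentiableOn_cexpBump : DifferentiableOn ℂ cexpBump {z | z * (1 - z) ≠ 0} :=
  fun z hz => ((differentiableAt_const (1 : ℂ)).div
    (by fun_prop : DifferentiableAt ℂ (fun z : ℂ => z * (1 - z)) z) hz).neg.cexp
    |>.differentiableWithinAt

lemma isOpen_mul_one_sub_ne_zero : IsOpen {z : ℂ | z * (1 - z) ≠ 0} :=
  isOpen_ne_fun (by fun_prop) continuous_const

lemma norm_mul_one_sub_sub_le {s r : ℝ} (hs : s ∈ Icc 0 1) (hr : r ≤ 1) {z : ℂ}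
    (hz : ‖z - s‖ ≤ r) : ‖z * (1 - z) - (s * (1 - s) : ℝ)‖ ≤ 2 * r := by
  have h12s : ‖(1 - 2 * s : ℝ)‖ ≤ 1 := by
    rw [Real.norm_eq_abs, abs_le]; constructor <;> linarith [hs.1, hs.2]
  have hr0 : 0 ≤ r := (norm_nonneg _).trans hz
  calc ‖z * (1 - z) - (s * (1 - s) : ℝ)‖
      = ‖(z - s) * (1 - 2 * s : ℝ) - (z - s) ^ 2‖ := by push_cast; ring_nf
    _ ≤ ‖z - s‖ * ‖(1 - 2 * s : ℝ)‖ + ‖z - s‖ ^ 2 := by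
      rw [← norm_pow, ← Complex.norm_real, ← norm_mul]; exact norm_sub_le _ _
    _ ≤ r * 1 + r ^ 2 := by gcongr
    _ ≤ 2 * r := by nlinarith

lemma norm_inv_sub_inv_le_one {a : ℝ} (ha : 0 < a) (ha1 : a ≤ 1) {w : ℂ}
    (hw : ‖w - a‖ ≤ a ^ 2 / 2) : ‖w⁻¹ - (a : ℂ)⁻¹‖ ≤ 1 := by
  have hwa : a / 2 ≤ ‖w‖ := by
    have := norm_sub_norm_le (a : ℂ) w
    rw [norm_sub_rev, Complex.norm_real, Real.norm_of_nonneg ha.le] at this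
    nlinarith
  have hw0 : w ≠ 0 := norm_pos_iff.1 (by linarith)
  have ha0 : (a : ℂ) ≠ 0 := by exact_mod_cast ha.ne'
  rw [inv_sub_inv hw0 ha0, norm_div, norm_mul, norm_sub_rev, Complex.norm_real,
    Real.norm_of_nonneg ha.le, div_le_one (by positivity)]
  nlinarith

lemma norm_cexpBump_le {a : ℝ} (ha : 0 < a) (ha1 : a ≤ 1) {z : ℂ}
    (hz : ‖z * (1 - z) - a‖ ≤ a ^ 2 / 2) :
    ‖cexpBump z‖ ≤ Real.exp 1 * Real.exp (-(1 / a)) := by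
  have hre : 1 / a - 1 ≤ (z * (1 - z))⁻¹.re := by
    have h := (Complex.abs_re_le_norm _).trans (norm_inv_sub_inv_le_one ha ha1 hz)
    rw [Complex.sub_re, ← Complex.ofReal_inv, Complex.ofReal_re, abs_le] at h
    rw [one_div]; linarith [h.1]
  rw [cexpBump, Complex.norm_exp, ← Real.exp_add, Real.exp_le_exp, Complex.neg_re, one_div]
  linarith

lemma norm_iteratedDeriv_cexpBump_le {s : ℝ} (hs : s ∈ Ioo 0 1) (n : ℕ) :
    ‖iteratedDeriv n cexpBump s‖ ≤
      n.factorial * (Real.exp 1 * Real.exp (-(1 / (s * (1 - s))))) *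
        (2 / (s * (1 - s))) ^ (2 * n) := by
  set a := s * (1 - s)
  have ha : 0 < a := mul_pos hs.1 (by linarith [hs.2])
  have ha1 : a ≤ 1 := by nlinarith [hs.1, hs.2]
  have hR : 0 < a ^ 2 / 4 := by positivity
  have hclose : ∀ z ∈ closedBall (s : ℂ) (a ^ 2 / 4), ‖z * (1 - z) - a‖ ≤ a ^ 2 / 2 := by
    intro z hz
    have := norm_mul_one_sub_sub_le (Ioo_subset_Icc_self hs) (by nlinarith)
      (mem_closedBall_iff_norm.1 hz)
    linarith
  have hball : closedBall (s : ℂ) (a ^ 2 / 4) ⊆ {z | z * (1 - z) ≠ 0} := by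
    intro z hz h0
    have := hclose z hz
    rw [h0, zero_sub, norm_neg, Complex.norm_real, Real.norm_of_nonneg ha.le] at this
    nlinarith
  have := Complex.norm_iteratedDeriv_le_of_forall_mem_sphere_norm_le n hR
    (differentiableOn_cexpBump.diffContOnCl_ball hball)
    (fun z hz => norm_cexpBump_le ha ha1 (hclose z (sphere_subset_closedBall hz)))
  have hpow : (2 / a) ^ (2 * n) = ((a ^ 2 / 4) ^ n)⁻¹ := by
    rw [pow_mul, ← inv_pow]; congr 1; field_simp; norm_num
  rwa [hpow, ← div_eq_mul_inv]

lemma iteratedDeriv_re_comp_ofReal {F : ℂ → ℂ} {U : Set ℂ} (hU : IsOpen U)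
    (hF : DifferentiableOn ℂ F U) (n : ℕ) {x : ℝ} (hx : (x : ℂ) ∈ U) :
    iteratedDeriv n (fun y : ℝ => (F y).re) x = (iteratedDeriv n F x).re := by
  induction n generalizing x with
  | zero => simp
  | succ n ih =>
    have hUR : {y : ℝ | (y : ℂ) ∈ U} ∈ 𝓝 x :=
      (hU.preimage Complex.continuous_ofReal).mem_nhds hx
    have hderiv : HasDerivAt (iteratedDeriv n F) (iteratedDeriv (n + 1) F x) x := by
      rw [iteratedDeriv_succ, iteratedDeriv_eq_iterate]
      exact ((hF.analyticOnNhd hU).iterated_deriv n x hx).differentiableAt.hasDerivAt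
    rw [iteratedDeriv_succ, (eventuallyEq_of_mem hUR fun y hy => ih hy).deriv_eq]
    exact hderiv.real_of_complex.deriv

noncomputable def expBump (t : ℝ) : ℝ :=
  if t ∈ Ioo (0 : ℝ) 1 then Real.exp (-(1 / (t * (1 - t)))) else 0

lemma expBump_eq_re_cexpBump {t : ℝ} (ht : t ∈ Ioo 0 1) : expBump t = (cexpBump t).re := by
  rw [expBump, if_pos ht, cexpBump, ← Complex.exp_ofReal_re]
  push_cast
  rfl

lemma expBump_eventuallyEq {t : ℝ} (ht : t ∈ Ioo 0 1) :
    expBump =ᶠ[𝓝 t] fun y : ℝ => (cexpBump y).re :=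
  eventually_of_mem (isOpen_Ioo.mem_nhds ht) fun _ hy => expBump_eq_re_cexpBump hy

lemma ofReal_mul_one_sub_ne_zero {t : ℝ} (ht : t ∈ Ioo 0 1) : (t : ℂ) * (1 - t) ≠ 0 := by
  exact_mod_cast (mul_pos ht.1 (sub_pos.2 ht.2)).ne'

lemma continuousAt_expBump {t : ℝ} (ht : t ∈ Ioo 0 1) : ContinuousAt expBump t :=
  ((differentiableOn_cexpBump.differentiableAt (isOpen_mul_one_sub_ne_zero.mem_nhds
    (ofReal_mul_one_sub_ne_zero ht))).hasDerivAt.real_of_complex.continuousAt).congr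
    (expBump_eventuallyEq ht).symm

lemma measurable_expBump : Measurable expBump :=
  Measurable.ite measurableSet_Ioo (by fun_prop) measurable_const

lemma abs_expBump_le_one (t : ℝ) : |expBump t| ≤ 1 := by
  rw [expBump]
  split_ifs with ht
  · rw [abs_of_pos (Real.exp_pos _), Real.exp_le_one_iff, neg_nonpos]
    exact (one_div_pos.2 (mul_pos ht.1 (sub_pos.2 ht.2))).le
  · simp

lemma intervalIntegrable_expBump (a b : ℝ) : IntervalIntegrable expBump volume a b :=
  (intervalIntegrable_iff).2 <| Measure.integrableOn_of_bounded measure_Ioc_lt_top.ne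
    measurable_expBump.aestronglyMeasurable (ae_of_all _ abs_expBump_le_one)

lemma integral_expBump_pos : 0 < ∫ t in (0 : ℝ)..1, expBump t :=
  intervalIntegral.intervalIntegral_pos_of_pos_on (intervalIntegrable_expBump 0 1)
    (fun t ht => by rw [expBump, if_pos ht]; exact Real.exp_pos _) one_pos

lemma hasDerivAt_integral_expBump {t : ℝ} (ht : t ∈ Ioo 0 1) :
    HasDerivAt (fun u => ∫ y in (0 : ℝ)..u, expBump y) (expBump t) t :=
  intervalIntegral.integral_hasDerivAt_right (intervalIntegrable_expBump 0 t)
    measurable_expBump.stronglyMeasurable.stronglyMeasurableAtFilter (continuousAt_expBump ht)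

lemma abs_iteratedDeriv_expBump_le {s : ℝ} (hs : s ∈ Ioo 0 1) (n : ℕ) :
    |iteratedDeriv n expBump s| ≤
      n.factorial * (Real.exp 1 * Real.exp (-(1 / (s * (1 - s))))) *
        (2 / (s * (1 - s))) ^ (2 * n) := by
  rw [(expBump_eventuallyEq hs).iteratedDeriv_eq n, iteratedDeriv_re_comp_ofReal
    isOpen_mul_one_sub_ne_zero differentiableOn_cexpBump n (ofReal_mul_one_sub_ne_zero hs)]
  exact (Complex.abs_re_le_norm _).trans (norm_iteratedDeriv_cexpBump_le hs n)

lemma Nat.factorial_mul_add_one_add_one_sq_le (n : ℕ) :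
    n.factorial * (n + 1 + 1) ^ 2 ≤ 4 * (n + 1).factorial ^ 2 := by
  have h1 : 1 ≤ n.factorial := n.factorial_pos
  rw [Nat.factorial_succ]
  calc n.factorial * (n + 1 + 1) ^ 2 ≤ n.factorial * n.factorial * (2 * (n + 1)) ^ 2 := by
        gcongr
        · exact Nat.le_mul_of_pos_right _ h1
        · omega
    _ = 4 * ((n + 1) * n.factorial) ^ 2 := by ring

theorem stmt_14
    (g : ℝ → ℝ)
    (hg : ∀ t, g t = if t ∈ Set.Ioo (0:ℝ) 1 then Real.exp (-(1 / (t * (1 - t)))) else 0)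
    (ce : ℝ) (hce : ce = ∫ t in (0:ℝ)..1, g t)
    (f : ℝ → ℝ) (hf : ∀ s, f s = ce⁻¹ * ∫ t in (0:ℝ)..s, g t)
    (k : ℕ) (hk : 1 ≤ k) (s : ℝ) (hs : s ∈ Set.Ioo (0:ℝ) 1) :
    |iteratedDeriv k f s| ≤
      (4 * Real.exp 1 / ce) * Real.exp (-(1 / (s * (1 - s)))) *
        (2 / (s * (1 - s))) ^ (2 * (k - 1)) * (k.factorial : ℝ) ^ 2 / ((k : ℝ) + 1) ^ 2 := by
  obtain rfl : g = expBump := funext hg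
  obtain ⟨n, rfl⟩ : ∃ n, k = n + 1 := ⟨k - 1, by omega⟩
  have hce_pos : 0 < ce := hce ▸ integral_expBump_pos
  have hderiv : deriv f =ᶠ[𝓝 s] fun x => ce⁻¹ * expBump x :=
    eventually_of_mem (isOpen_Ioo.mem_nhds hs) fun x hx => by
      rw [funext hf]; exact ((hasDerivAt_integral_expBump hx).const_mul ce⁻¹).deriv
  have hfactorial :
      (n.factorial : ℝ) ≤ 4 * ((n + 1).factorial : ℝ) ^ 2 / ((n + 1 : ℕ) + 1) ^ 2 := by
    rw [le_div_iff₀ (by positivity)]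
    exact_mod_cast Nat.factorial_mul_add_one_add_one_sq_le n
  rw [iteratedDeriv_succ', hderiv.iteratedDeriv_eq n, iteratedDeriv_const_mul_field, abs_mul,
    abs_inv, abs_of_pos hce_pos, Nat.add_sub_cancel]
  have ha : 0 < s * (1 - s) := mul_pos hs.1 (sub_pos.2 hs.2)
  set X := Real.exp 1 * Real.exp (-(1 / (s * (1 - s)))) * (2 / (s * (1 - s))) ^ (2 * n)
  have hX : 0 ≤ X := by positivity
  calc ce⁻¹ * |iteratedDeriv n expBump s| ≤ ce⁻¹ * (n.factorial * X) := by
        gcongr; rw [← mul_assoc]; exact abs_iteratedDeriv_expBump_le hs n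
    _ ≤ ce⁻¹ * (4 * ((n + 1).factorial : ℝ) ^ 2 / ((n + 1 : ℕ) + 1) ^ 2 * X) := by gcongr
    _ = _ := by ring
end

section
/- Let g(y) = exp(1/y) for y > 0. For every nonnegative integer m and every 0 < y < 1, the m-th derivative satisfies |g^{(m)}(y)| ≤ 4^m · m! · exp(1/y) · y^{-2m}. -/
/-! The `m`-th derivative of `exp (1 / t)` is `exp (1 / t) * P_m (1 / t)`, where `P_0 = 1` and
`P_{m+1} = -X² (P_m + P_m')`. Thus `deg P_m ≤ 2m`, and since differentiation multiplies the
`ℓ¹`-norm of the coefficients by at most the degree,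
`‖P_{m+1}‖₁ ≤ (2m + 1) ‖P_m‖₁ ≤ 4 (m + 1) ‖P_m‖₁`.
Finally `|P(x)| ≤ ‖P‖₁ x ^ deg P` for `x = 1 / y ≥ 1`. -/

open Polynomial Finset Real Filter Topology
open scoped Nat

namespace Polynomial

section L1Norm

variable {R : Type*} [SeminormedRing R]

noncomputable def l1Norm (p : R[X]) : ℝ := p.sum fun _ a => ‖a‖

lemma l1Norm_eq_sum_range {p : R[X]} {n : ℕ} (hn : p.natDegree < n) :
    p.l1Norm = ∑ k ∈ range n, ‖p.coeff k‖ :=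
  p.sum_over_range' (fun _ => norm_zero) n hn

lemma l1Norm_nonneg (p : R[X]) : 0 ≤ p.l1Norm := by
  rw [l1Norm_eq_sum_range p.natDegree.lt_succ_self]
  positivity

@[simp] lemma l1Norm_one [NormOneClass R] : (1 : R[X]).l1Norm = 1 := by
  simp [l1Norm_eq_sum_range (p := (1 : R[X])) (n := 1) (by simp)]

@[simp] lemma l1Norm_neg (p : R[X]) : (-p).l1Norm = p.l1Norm := by
  simp [l1Norm, Polynomial.sum_def]

lemma l1Norm_add_le (p q : R[X]) : (p + q).l1Norm ≤ p.l1Norm + q.l1Norm := by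
  have hpq := natDegree_add_le p q
  set n := max p.natDegree q.natDegree + 1
  rw [l1Norm_eq_sum_range (n := n) (by omega), l1Norm_eq_sum_range (n := n) (by omega),
    l1Norm_eq_sum_range (n := n) (by omega), ← sum_add_distrib]
  exact sum_le_sum fun k _ => coeff_add p q k ▸ norm_add_le _ _

@[simp] lemma l1Norm_X_pow_mul (n : ℕ) (p : R[X]) : (X ^ n * p).l1Norm = p.l1Norm := by
  have hdeg : (X ^ n * p).natDegree < n + (p.natDegree + 1) :=
    natDegree_mul_le.trans_lt (by have := natDegree_X_pow_le (R := R) n; omega)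
  rw [l1Norm_eq_sum_range hdeg, sum_range_add, l1Norm_eq_sum_range p.natDegree.lt_succ_self,
    sum_eq_zero fun k hk => by simp [coeff_X_pow_mul', not_le.mpr (mem_range.mp hk)], zero_add]
  simp [coeff_X_pow_mul']

lemma l1Norm_derivative_le [NormOneClass R] (p : R[X]) :
    (derivative p).l1Norm ≤ p.natDegree * p.l1Norm := by
  set d := p.natDegree
  have hd : (derivative p).natDegree < d + 1 := (natDegree_derivative_le p).trans_lt (by omega)
  rw [l1Norm_eq_sum_range hd, l1Norm_eq_sum_range (n := d + 2) (by omega),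
    sum_range_succ' (fun k => ‖p.coeff k‖), mul_add, mul_sum]
  refine (sum_le_sum fun k _ => ?_).trans (le_add_of_nonneg_right (by positivity))
  rw [coeff_derivative]
  by_cases hk : k + 1 ≤ d
  · calc ‖p.coeff (k + 1) * ((k : R) + 1)‖
          ≤ ‖p.coeff (k + 1)‖ * ‖((k + 1 : ℕ) : R)‖ := by push_cast; exact norm_mul_le _ _
      _ ≤ ‖p.coeff (k + 1)‖ * (k + 1 : ℕ) := by
          gcongr; simpa using Nat.norm_cast_le (α := R) (k + 1)
      _ ≤ d * ‖p.coeff (k + 1)‖ := by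
          rw [mul_comm]; gcongr
  · simp [coeff_eq_zero_of_natDegree_lt (by omega : d < k + 1)]

lemma norm_eval_le_l1Norm_mul_pow [NormOneClass R] (p : R[X]) {x : R} (hx : 1 ≤ ‖x‖) :
    ‖p.eval x‖ ≤ p.l1Norm * ‖x‖ ^ p.natDegree := by
  rw [eval_eq_sum_range, l1Norm_eq_sum_range p.natDegree.lt_succ_self, sum_mul]
  refine (norm_sum_le _ _).trans (sum_le_sum fun k hk => ?_)
  calc ‖p.coeff k * x ^ k‖ ≤ ‖p.coeff k‖ * ‖x‖ ^ k :=
        (norm_mul_le _ _).trans (by gcongr; exact norm_pow_le x k)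
    _ ≤ ‖p.coeff k‖ * ‖x‖ ^ p.natDegree := by
        gcongr
        exact Nat.lt_succ_iff.mp (mem_range.mp hk)

end L1Norm

end Polynomial

noncomputable def expInvDerivPoly : ℕ → ℝ[X]
  | 0 => 1
  | m + 1 => -(X ^ 2 * (expInvDerivPoly m + derivative (expInvDerivPoly m)))

lemma hasDerivAt_exp_inv_mul_eval (P : ℝ[X]) {t : ℝ} (ht : t ≠ 0) :
    HasDerivAt (fun s => exp (1 / s) * P.eval (1 / s))
      (exp (1 / t) * (-(X ^ 2 * (P + derivative P))).eval (1 / t)) t := by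
  have hinv : HasDerivAt (fun s : ℝ => 1 / s) (-(1 / t) ^ 2) t := by
    simpa [one_div] using hasDerivAt_inv ht
  have hP : HasDerivAt (fun s => P.eval (1 / s)) ((derivative P).eval (1 / t) * -(1 / t) ^ 2) t :=
    (P.hasDerivAt (1 / t)).comp t hinv
  refine (hinv.exp.mul hP).congr_deriv ?_
  simp only [eval_neg, eval_mul, eval_add, eval_pow, eval_X]
  ring

lemma iteratedDeriv_exp_inv (m : ℕ) {t : ℝ} (ht : t ≠ 0) :
    iteratedDeriv m (fun s => exp (1 / s)) t = exp (1 / t) * (expInvDerivPoly m).eval (1 / t) := by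
  induction m generalizing t with
  | zero => simp [expInvDerivPoly]
  | succ m ih =>
    have hloc : iteratedDeriv m (fun s => exp (1 / s)) =ᶠ[𝓝 t]
        fun s => exp (1 / s) * (expInvDerivPoly m).eval (1 / s) :=
      (eventually_ne_nhds ht).mono fun s hs => ih hs
    rw [iteratedDeriv_succ, hloc.deriv_eq, (hasDerivAt_exp_inv_mul_eval _ ht).deriv]
    rfl

lemma natDegree_expInvDerivPoly_le (m : ℕ) : (expInvDerivPoly m).natDegree ≤ 2 * m := by
  induction m with
  | zero => simp [expInvDerivPoly]
  | succ m ih =>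
    set P := expInvDerivPoly m
    have hsum : (P + derivative P).natDegree ≤ P.natDegree :=
      (natDegree_add_le _ _).trans
        (max_le le_rfl ((natDegree_derivative_le P).trans (Nat.sub_le _ _)))
    calc (expInvDerivPoly (m + 1)).natDegree = (X ^ 2 * (P + derivative P)).natDegree :=
          natDegree_neg _
      _ ≤ 2 + P.natDegree := natDegree_mul_le.trans (add_le_add (natDegree_X_pow_le 2) hsum)
      _ ≤ 2 * (m + 1) := by omega

lemma l1Norm_expInvDerivPoly_le (m : ℕ) : (expInvDerivPoly m).l1Norm ≤ 4 ^ m * m ! := by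
  induction m with
  | zero => simp [expInvDerivPoly]
  | succ m ih =>
    set P := expInvDerivPoly m
    have hdeg : (P.natDegree : ℝ) ≤ 2 * m := by exact_mod_cast natDegree_expInvDerivPoly_le m
    calc (expInvDerivPoly (m + 1)).l1Norm = (P + derivative P).l1Norm := by
          simp [expInvDerivPoly, P]
      _ ≤ P.l1Norm + P.natDegree * P.l1Norm :=
          (l1Norm_add_le _ _).trans (by gcongr; exact l1Norm_derivative_le P)
      _ ≤ (2 * m + 1) * P.l1Norm := by nlinarith [l1Norm_nonneg P]
      _ ≤ 4 * (m + 1) * (4 ^ m * m !) :=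
          mul_le_mul (by linarith) ih (l1Norm_nonneg P) (by positivity)
      _ = 4 ^ (m + 1) * (m + 1)! := by push_cast [Nat.factorial_succ]; ring

theorem stmt_15 (m : ℕ) (y : ℝ) (hy : y ∈ Set.Ioo (0:ℝ) 1) :
    |iteratedDeriv m (fun t : ℝ => Real.exp (1 / t)) y|
      ≤ 4 ^ m * (m.factorial : ℝ) * Real.exp (1 / y) / y ^ (2 * m) := by
  obtain ⟨hy0, hy1⟩ := hy
  set P := expInvDerivPoly m
  have hx : 1 ≤ ‖1 / y‖ := by
    rw [Real.norm_of_nonneg (by positivity)]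
    exact one_le_one_div hy0 hy1.le
  have hP : |P.eval (1 / y)| ≤ 4 ^ m * m ! * (1 / y) ^ (2 * m) := calc
    |P.eval (1 / y)| ≤ P.l1Norm * ‖1 / y‖ ^ P.natDegree := P.norm_eval_le_l1Norm_mul_pow hx
    _ ≤ 4 ^ m * m ! * ‖1 / y‖ ^ (2 * m) := by
        gcongr
        exacts [l1Norm_expInvDerivPoly_le m, natDegree_expInvDerivPoly_le m]
    _ = 4 ^ m * m ! * (1 / y) ^ (2 * m) := by rw [Real.norm_of_nonneg (by positivity)]
  rw [iteratedDeriv_exp_inv m hy0.ne', abs_mul, abs_of_pos (exp_pos _)]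
  calc exp (1 / y) * |P.eval (1 / y)| ≤ exp (1 / y) * (4 ^ m * m ! * (1 / y) ^ (2 * m)) := by
        gcongr
    _ = 4 ^ m * m ! * exp (1 / y) / y ^ (2 * m) := by rw [one_div_pow]; ring
end

section
/- Let κ > e, l ≥ 1 an integer, c = √c_e/4 with c_e = ∫₀¹ exp(-1/(t(1-t))) dt, and let f be the AQC(exp) schedule f(s) = c_e^{-1}∫₀^s exp(-1/(t(1-t)))dt. Define F(s) = exp(-1/(s(1-s))) / ((1 - f(s) + f(s)/κ)·(s(1-s))^{2l-2}) for s ∈ (0,1). Then for all s ∈ (0,1), F(s) ≤ (2c_e/e²) · (64e²/c_e)^l · (log κ)^{2l} · (l!)². -/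
/-!
Write `x = s(1-s)`, `L = log κ`, `k = l - 1` and `D = 1 - f + f/κ`. Since `0 ≤ f ≤ 1`, `D` is
at least `κ⁻¹` and at least `1 - f(s) = c_e⁻¹ ∫ₛ¹ exp(-1/(t(1-t))) dt`; the integrand stays above
`e⁻¹ exp(-1/x)` on `[s, s + x²/4]`, so `1 - f(s) ≥ x² exp(-1/x) / (32 c_e)`.
If `2Lx ≤ 1`, split `exp(-1/x) = exp(-1/(2x)) · exp(-1/(4x))²`: the first factor is at most `κ⁻¹`
and the second at most `(k!)² (4x)^(2k)`, so `F ≤ 16^k (k!)²`. Otherwise the tail bound gives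
`F ≤ 32 c_e / x^(2k+2) ≤ 32 c_e (2L)^(2k+2)`. Both are below the claimed bound as `c_e ≤ 1 ≤ L`.
-/

open Real MeasureTheory intervalIntegral Set Nat

noncomputable def bump (t : ℝ) : ℝ :=
  if t ∈ Ioo (0:ℝ) 1 then exp (-(1 / (t * (1 - t)))) else 0

lemma bump_nonneg (t : ℝ) : 0 ≤ bump t := by
  unfold bump; split <;> positivity

lemma bump_le_one (t : ℝ) : bump t ≤ 1 := by
  unfold bump
  split_ifs with ht
  · have : 0 < t * (1 - t) := mul_pos ht.1 (sub_pos.2 ht.2)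
    exact exp_le_one_iff.2 (neg_nonpos.2 (by positivity))
  · exact zero_le_one

lemma intervalIntegrable_bump (a b : ℝ) : IntervalIntegrable bump volume a b := by
  refine (intervalIntegrable_const (c := (1:ℝ))).mono_fun ?_ ?_
  · exact (Measurable.ite measurableSet_Ioo (by fun_prop) measurable_const).aestronglyMeasurable
  · refine .of_forall fun t => ?_
    simpa [abs_of_nonneg (bump_nonneg t)] using bump_le_one t

lemma integral_bump_pos : 0 < ∫ t in (0:ℝ)..1, bump t :=
  intervalIntegral_pos_of_pos_on (intervalIntegrable_bump 0 1)
    (fun t ht => by rw [bump, if_pos ht]; positivity) one_pos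

lemma integral_bump_le_one : ∫ t in (0:ℝ)..1, bump t ≤ 1 := by
  simpa using integral_mono_on zero_le_one (intervalIntegrable_bump 0 1)
    intervalIntegrable_const fun t _ => bump_le_one t

lemma exp_neg_one_mul_le_bump {s t : ℝ} (hs : s ∈ Ioo 0 1)
    (ht : t ∈ Icc s (s + (s * (1 - s)) ^ 2 / 4)) :
    exp (-1) * exp (-(1 / (s * (1 - s)))) ≤ bump t := by
  set x := s * (1 - s)
  have hx0 : 0 < x := mul_pos hs.1 (sub_pos.2 hs.2)
  have hx4 : x ≤ 1 / 4 := by nlinarith [sq_nonneg (2 * s - 1)]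
  have htx : x / (1 + x) ≤ t * (1 - t) := by
    obtain ⟨u, hu0, hu, rfl⟩ : ∃ u, 0 ≤ u ∧ u ≤ x ^ 2 / 4 ∧ t = s + u :=
      ⟨t - s, sub_nonneg.2 ht.1, by linarith [ht.2], by ring⟩
    have hu' : u * (2 * s - 1) + u ^ 2 ≤ x ^ 2 / 4 + x ^ 2 / 4 * (x ^ 2 / 4) := by
      nlinarith [hs.2, mul_le_mul hu hu hu0 (by positivity)]
    rw [div_le_iff₀ (by positivity)]
    nlinarith [mul_le_mul_of_nonneg_right hu' (by positivity : (0:ℝ) ≤ 1 + x)]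
  have hpos : 0 < t * (1 - t) := (by positivity : 0 < x / (1 + x)).trans_le htx
  have ht01 : t ∈ Ioo 0 1 := ⟨hs.1.trans_le ht.1, by nlinarith [hs.1.trans_le ht.1]⟩
  rw [bump, if_pos ht01, ← exp_add, exp_le_exp]
  have : 1 / (t * (1 - t)) ≤ (1 + x) / x := by
    rw [div_le_div_iff₀ hpos hx0]; rw [div_le_iff₀ (by positivity)] at htx; linarith
  rw [add_div, div_self hx0.ne'] at this
  linarith

lemma le_integral_bump_tail {s : ℝ} (hs : s ∈ Ioo 0 1) :
    (s * (1 - s)) ^ 2 / 32 * exp (-(1 / (s * (1 - s)))) ≤ ∫ t in s..1, bump t := by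
  set x := s * (1 - s)
  have hx0 : 0 < x := mul_pos hs.1 (sub_pos.2 hs.2)
  have hδ : s + x ^ 2 / 4 ≤ 1 := by
    have : x ≤ 1 - s := by nlinarith [hs.2]
    nlinarith [hs.1, hs.2]
  have he : (1:ℝ) / 8 ≤ exp (-1) := by
    rw [exp_neg, one_div]; exact inv_anti₀ (exp_pos 1) (by linarith [exp_one_lt_d9])
  calc x ^ 2 / 32 * exp (-(1 / x))
      ≤ x ^ 2 / 4 * (exp (-1) * exp (-(1 / x))) := by
        rw [← mul_assoc]; gcongr; nlinarith [sq_nonneg x]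
    _ = ∫ _ in s..s + x ^ 2 / 4, exp (-1) * exp (-(1 / x)) := by
        rw [intervalIntegral.integral_const, smul_eq_mul]; ring
    _ ≤ ∫ t in s..s + x ^ 2 / 4, bump t :=
        integral_mono_on (le_add_of_nonneg_right (by positivity)) intervalIntegrable_const
          (intervalIntegrable_bump _ _)
          fun t ht => exp_neg_one_mul_le_bump hs ht
    _ ≤ ∫ t in s..1, bump t :=
        integral_mono_interval le_rfl (le_add_of_nonneg_right (by positivity)) hδ
          (.of_forall bump_nonneg)
          (intervalIntegrable_bump _ _)

noncomputable def bumpSchedule (s : ℝ) : ℝ :=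
  (∫ t in (0:ℝ)..1, bump t)⁻¹ * ∫ t in (0:ℝ)..s, bump t

lemma one_sub_bumpSchedule (s : ℝ) :
    1 - bumpSchedule s = (∫ t in (0:ℝ)..1, bump t)⁻¹ * ∫ t in s..1, bump t := by
  have hsplit := integral_add_adjacent_intervals (intervalIntegrable_bump 0 s)
    (intervalIntegrable_bump s 1)
  have hpos := integral_bump_pos
  rw [bumpSchedule]
  field_simp
  linarith

lemma bumpSchedule_nonneg {s : ℝ} (hs : 0 ≤ s) : 0 ≤ bumpSchedule s :=
  mul_nonneg (inv_nonneg.2 integral_bump_pos.le)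
    (integral_nonneg hs fun t _ => bump_nonneg t)

lemma bumpSchedule_le_one {s : ℝ} (hs : s ≤ 1) : bumpSchedule s ≤ 1 := by
  have h : 0 ≤ 1 - bumpSchedule s := by
    rw [one_sub_bumpSchedule]
    exact mul_nonneg (inv_nonneg.2 integral_bump_pos.le)
      (integral_nonneg hs fun t _ => bump_nonneg t)
  linarith

lemma le_one_sub_bumpSchedule {s : ℝ} (hs : s ∈ Ioo 0 1) :
    (s * (1 - s)) ^ 2 * exp (-(1 / (s * (1 - s)))) / (32 * ∫ t in (0:ℝ)..1, bump t)
      ≤ 1 - bumpSchedule s := by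
  calc _ = (s * (1 - s)) ^ 2 / 32 * exp (-(1 / (s * (1 - s)))) / ∫ t in (0:ℝ)..1, bump t := by
        ring
    _ ≤ 1 - bumpSchedule s := by
        rw [one_sub_bumpSchedule, inv_mul_eq_div]
        exact div_le_div_of_nonneg_right (le_integral_bump_tail hs) integral_bump_pos.le

lemma exp_neg_inv_le_factorial_mul_pow {x : ℝ} (hx : 0 < x) (n : ℕ) :
    exp (-(1 / x)) ≤ n ! * x ^ n := by
  have h := pow_div_factorial_le_exp _ (one_div_pos.2 hx).le n
  rw [one_div_pow, div_div, one_div, mul_comm] at h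
  rw [exp_neg, inv_le_comm₀ (exp_pos _) (by positivity)]
  exact h

lemma exp_neg_inv_div_le_of_two_log_mul_le {x κ D : ℝ} (hx : 0 < x) (hκ : 0 < κ)
    (hD : κ⁻¹ ≤ D) (hxκ : 2 * log κ * x ≤ 1) (k : ℕ) :
    exp (-(1 / x)) / (D * x ^ (2 * k)) ≤ 16 ^ k * (k ! : ℝ) ^ 2 := by
  have hsplit : exp (-(1 / x)) = exp (-(1 / (2 * x))) * exp (-(1 / (4 * x))) ^ 2 := by
    rw [← exp_nat_mul, ← exp_add]; congr 1; field_simp; ring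
  have hκ' : exp (-(1 / (2 * x))) ≤ κ⁻¹ := by
    rw [← exp_log hκ, ← exp_neg, exp_le_exp, neg_le_neg_iff, le_div_iff₀ (by positivity)]
    linarith
  have hpow : exp (-(1 / (4 * x))) ^ 2 ≤ 16 ^ k * (k ! : ℝ) ^ 2 * x ^ (2 * k) := by
    calc exp (-(1 / (4 * x))) ^ 2 ≤ (k ! * (4 * x) ^ k) ^ 2 := by
          gcongr; exact exp_neg_inv_le_factorial_mul_pow (by positivity) k
      _ = 16 ^ k * (k ! : ℝ) ^ 2 * x ^ (2 * k) := by
          rw [show (16:ℝ) ^ k = (4 ^ k) ^ 2 by rw [← pow_mul, mul_comm, pow_mul]; norm_num]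
          ring
  have hD0 : 0 < D := (inv_pos.2 hκ).trans_le hD
  rw [div_le_iff₀ (by positivity), hsplit]
  calc exp (-(1 / (2 * x))) * exp (-(1 / (4 * x))) ^ 2
      ≤ κ⁻¹ * (16 ^ k * (k ! : ℝ) ^ 2 * x ^ (2 * k)) := by gcongr
    _ ≤ D * (16 ^ k * (k ! : ℝ) ^ 2 * x ^ (2 * k)) := by gcongr
    _ = 16 ^ k * (k ! : ℝ) ^ 2 * (D * x ^ (2 * k)) := by ring

lemma exp_neg_inv_div_le_of_one_le_two_log_mul {x c L D : ℝ} (hx : 0 < x) (hc : 0 < c)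
    (hD : x ^ 2 * exp (-(1 / x)) / (32 * c) ≤ D) (hxL : 1 ≤ 2 * L * x) (k : ℕ) :
    exp (-(1 / x)) / (D * x ^ (2 * k)) ≤ 32 * c * (2 * L) ^ (2 * k + 2) := by
  have hpos : 0 < x ^ 2 * exp (-(1 / x)) / (32 * c) := by positivity
  calc exp (-(1 / x)) / (D * x ^ (2 * k))
      ≤ exp (-(1 / x)) / (x ^ 2 * exp (-(1 / x)) / (32 * c) * x ^ (2 * k)) := by gcongr
    _ = 32 * c * 1 / x ^ (2 * k + 2) := by field_simp; ring
    _ ≤ 32 * c * (2 * L * x) ^ (2 * k + 2) / x ^ (2 * k + 2) := by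
        gcongr; exact one_le_pow₀ hxL
    _ = 32 * c * (2 * L) ^ (2 * k + 2) := by rw [mul_pow]; field_simp

lemma inv_le_one_sub_add_div {p κ : ℝ} (hκ : 1 ≤ κ) (hp : p ≤ 1) :
    κ⁻¹ ≤ 1 - p + p / κ := by
  have h : 1 - p + p / κ - κ⁻¹ = (1 - p) * (1 - κ⁻¹) := by ring
  nlinarith [mul_nonneg (sub_nonneg.2 hp) (sub_nonneg.2 (inv_le_one_of_one_le₀ hκ))]

noncomputable def gapBound (c L : ℝ) (l : ℕ) : ℝ :=
  2 * c / exp 1 ^ 2 * (64 * exp 1 ^ 2 / c) ^ l * L ^ (2 * l) * (l ! : ℝ) ^ 2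

lemma gapBound_succ {c : ℝ} (hc : c ≠ 0) (L : ℝ) (k : ℕ) :
    gapBound c L (k + 1) =
      128 * (64 * exp 1 ^ 2 / c) ^ k * L ^ (2 * k + 2) * ((k + 1)! : ℝ) ^ 2 := by
  have h128 : 2 * c / exp 1 ^ 2 * (64 * exp 1 ^ 2 / c) = 128 := by field_simp; ring
  rw [gapBound, pow_succ]
  linear_combination (64 * exp 1 ^ 2 / c) ^ k * L ^ (2 * k + 2) * ((k + 1)! : ℝ) ^ 2 * h128

lemma sixteen_le_sixtyFour_mul_exp_one_sq_div {c : ℝ} (hc0 : 0 < c) (hc1 : c ≤ 1) :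
    16 ≤ 64 * exp 1 ^ 2 / c := by
  rw [le_div_iff₀ hc0]
  nlinarith [one_le_exp (zero_le_one' ℝ), one_le_pow₀ (one_le_exp (zero_le_one' ℝ)) (n := 2)]

lemma sixteen_pow_mul_factorial_sq_le_gapBound {c L : ℝ} (hc0 : 0 < c) (hc1 : c ≤ 1)
    (hL : 1 ≤ L) (k : ℕ) : 16 ^ k * (k ! : ℝ) ^ 2 ≤ gapBound c L (k + 1) := by
  rw [gapBound_succ hc0.ne']
  have h16 := sixteen_le_sixtyFour_mul_exp_one_sq_div hc0 hc1
  have hfac : (k ! : ℝ) ≤ (k + 1)! := by exact_mod_cast factorial_le (le_succ k)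
  calc 16 ^ k * (k ! : ℝ) ^ 2 ≤ 1 * (64 * exp 1 ^ 2 / c) ^ k * 1 * ((k + 1)! : ℝ) ^ 2 := by
        rw [one_mul, mul_one]; gcongr
    _ ≤ 128 * (64 * exp 1 ^ 2 / c) ^ k * L ^ (2 * k + 2) * ((k + 1)! : ℝ) ^ 2 := by
        gcongr
        · norm_num
        · exact one_le_pow₀ hL

lemma mul_two_mul_pow_le_gapBound {c L : ℝ} (hc0 : 0 < c) (hc1 : c ≤ 1) (hL : 0 ≤ L)
    (k : ℕ) :
    32 * c * (2 * L) ^ (2 * k + 2) ≤ gapBound c L (k + 1) := by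
  rw [gapBound_succ hc0.ne']
  have h16 := sixteen_le_sixtyFour_mul_exp_one_sq_div hc0 hc1
  have hfac : (1 : ℝ) ≤ ((k + 1)! : ℝ) ^ 2 :=
    one_le_pow₀ (by exact_mod_cast (k + 1).factorial_pos)
  have h4 : (2:ℝ) ^ (2 * k) = 4 ^ k := by rw [pow_mul]; norm_num
  calc 32 * c * (2 * L) ^ (2 * k + 2) = 128 * (c * 4 ^ k) * L ^ (2 * k + 2) * 1 := by
        rw [← h4]; ring
    _ ≤ 128 * (64 * exp 1 ^ 2 / c) ^ k * L ^ (2 * k + 2) * ((k + 1)! : ℝ) ^ 2 := by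
        gcongr
        calc c * 4 ^ k ≤ 1 * 16 ^ k := by
              gcongr
              norm_num
          _ ≤ (64 * exp 1 ^ 2 / c) ^ k := by rw [one_mul]; gcongr

theorem stmt_16
    (g : ℝ → ℝ)
    (hg : ∀ t, g t = if t ∈ Set.Ioo (0:ℝ) 1 then Real.exp (-(1 / (t * (1 - t)))) else 0)
    (ce : ℝ) (hce : ce = ∫ t in (0:ℝ)..1, g t)
    (f : ℝ → ℝ) (hf : ∀ s, f s = ce⁻¹ * ∫ t in (0:ℝ)..s, g t)
    (κ : ℝ) (hκ : Real.exp 1 < κ) (l : ℕ) (hl : 1 ≤ l)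
    (F : ℝ → ℝ)
    (hF : ∀ s, F s = Real.exp (-(1 / (s * (1 - s)))) /
      ((1 - f s + f s / κ) * (s * (1 - s)) ^ (2 * l - 2)))
    (s : ℝ) (hs : s ∈ Set.Ioo (0:ℝ) 1) :
    F s ≤ (2 * ce / Real.exp 1 ^ 2) * (64 * Real.exp 1 ^ 2 / ce) ^ l *
      Real.log κ ^ (2 * l) * (l.factorial : ℝ) ^ 2 := by
  obtain ⟨k, rfl⟩ : ∃ k, l = k + 1 := ⟨l - 1, by omega⟩
  obtain rfl : g = bump := funext hg
  have hfs : f s = bumpSchedule s := by rw [hf, hce, bumpSchedule]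
  have hce0 : 0 < ce := hce ▸ integral_bump_pos
  have hce1 : ce ≤ 1 := hce ▸ integral_bump_le_one
  have hκ1 : 1 ≤ κ := (one_le_exp zero_le_one).trans hκ.le
  have hL : 1 ≤ log κ := (le_log_iff_exp_le (by positivity)).2 hκ.le
  have hx : 0 < s * (1 - s) := mul_pos hs.1 (sub_pos.2 hs.2)
  rw [hF, show 2 * (k + 1) - 2 = 2 * k by omega, hfs]
  change _ ≤ gapBound ce (log κ) (k + 1)
  rcases le_total (2 * log κ * (s * (1 - s))) 1 with h | h
  · exact (exp_neg_inv_div_le_of_two_log_mul_le hx (by positivity)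
      (inv_le_one_sub_add_div hκ1 (bumpSchedule_le_one hs.2.le)) h k).trans
      (sixteen_pow_mul_factorial_sq_le_gapBound hce0 hce1 hL k)
  · refine (exp_neg_inv_div_le_of_one_le_two_log_mul hx hce0 ?_ h k).trans
      (mul_two_mul_pow_le_gapBound hce0 hce1 (by positivity) k)
    calc _ ≤ 1 - bumpSchedule s := hce ▸ le_one_sub_bumpSchedule hs
      _ ≤ _ := le_add_of_nonneg_right (div_nonneg (bumpSchedule_nonneg hs.1.le) (by positivity))
end

section
/- Let A(s), B(s) be smooth matrix-valued functions on [0,1] such that for all k ≥ 0, ‖A^{(k)}(s)‖ ≤ a₁(s)a₂(s)^k [(k+p)!]^{1+α}/(k+1)² and ‖B^{(k)}(s)‖ ≤ b₁(s)b₂(s)^k [(k+q)!]^{1+α}/(k+1)², where α > 0, p,q are nonnegative integers, and a₁,a₂,b₁,b₂ are nonnegative functions. Then for all k ≥ 0 and s ∈ [0,1], ‖(A(s)B(s))^{(k)}‖ ≤ (4π²/3) a₁(s)b₁(s) max{a₂(s),b₂(s)}^k [(k+p+q)!]^{1+α}/(k+1)². -/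
open Real Finset

lemma nat_key (p q k l : ℕ) (h : l ≤ k) :
    k.choose l * (l + p).factorial * (k - l + q).factorial ≤ (k + p + q).factorial := by
  have e1 : (l + p).factorial = (l + p).choose l * l.factorial * p.factorial := by
    have := Nat.choose_mul_factorial_mul_factorial (Nat.le_add_right l p)
    simpa [Nat.add_sub_cancel_left] using this.symm
  have e2 : (k - l + q).factorial = (k - l + q).choose (k - l) * (k - l).factorial * q.factorial := by
    have := Nat.choose_mul_factorial_mul_factorial (Nat.le_add_right (k - l) q)
    simpa [Nat.add_sub_cancel_left] using this.symm
  have e3 : k.choose l * l.factorial * (k - l).factorial = k.factorial :=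
    Nat.choose_mul_factorial_mul_factorial h
  have hv : (l + p).choose l * (k - l + q).choose (k - l) ≤ (k + p + q).choose k := by
    rw [show k + p + q = (l + p) + (k - l + q) by omega]
    conv_rhs => rw [Nat.add_choose_eq]
    refine Finset.single_le_sum (f := fun ij : ℕ × ℕ => (l+p).choose ij.1 * (k-l+q).choose ij.2)
      (fun i _ => Nat.zero_le _) (a := (l, k - l)) ?_
    simp [Finset.mem_antidiagonal]; omega
  have e4 : (k + p + q).choose k * k.factorial * (p + q).factorial = (k + p + q).factorial := by
    have := Nat.choose_mul_factorial_mul_factorial (show k ≤ k + p + q by omega)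
    simpa [show k + p + q - k = p + q by omega] using this
  have hpq : p.factorial * q.factorial ≤ (p + q).factorial :=
    Nat.le_of_dvd (Nat.factorial_pos _) (Nat.factorial_mul_factorial_dvd_factorial_add p q)
  calc k.choose l * (l + p).factorial * (k - l + q).factorial
      = ((l + p).choose l * (k - l + q).choose (k - l)) * (k.choose l * l.factorial * (k - l).factorial) * (p.factorial * q.factorial) := by
        rw [e1, e2]; ring
    _ ≤ (k + p + q).choose k * k.factorial * (p + q).factorial := by
        rw [e3]; exact Nat.mul_le_mul (Nat.mul_le_mul hv le_rfl) hpq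
    _ = (k + p + q).factorial := e4

lemma rpow_key (α : ℝ) (hα : 0 ≤ α) (p q k l : ℕ) (h : l ≤ k) :
    (k.choose l : ℝ) * ((l + p).factorial : ℝ) ^ (1 + α) * ((k - l + q).factorial : ℝ) ^ (1 + α)
      ≤ ((k + p + q).factorial : ℝ) ^ (1 + α) := by
  have hc1 : (1:ℝ) ≤ (k.choose l : ℝ) := by
    exact_mod_cast Nat.one_le_iff_ne_zero.2 (Nat.choose_pos h).ne'
  have hcc : (k.choose l : ℝ) ≤ (k.choose l : ℝ) ^ (1 + α) := by
    nth_rewrite 1 [← Real.rpow_one (k.choose l : ℝ)]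
    exact Real.rpow_le_rpow_of_exponent_le hc1 (by linarith)
  have hfa : (0:ℝ) ≤ ((l + p).factorial : ℝ) := Nat.cast_nonneg _
  have hfb : (0:ℝ) ≤ ((k - l + q).factorial : ℝ) := Nat.cast_nonneg _
  calc (k.choose l : ℝ) * ((l + p).factorial : ℝ) ^ (1 + α) * ((k - l + q).factorial : ℝ) ^ (1 + α)
      ≤ (k.choose l : ℝ) ^ (1 + α) * ((l + p).factorial : ℝ) ^ (1 + α) * ((k - l + q).factorial : ℝ) ^ (1 + α) := by
        have h1 : (0:ℝ) ≤ ((l + p).factorial : ℝ) ^ (1 + α) := Real.rpow_nonneg hfa _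
        have h2 : (0:ℝ) ≤ ((k - l + q).factorial : ℝ) ^ (1 + α) := Real.rpow_nonneg hfb _
        exact mul_le_mul_of_nonneg_right (mul_le_mul_of_nonneg_right hcc h1) h2
    _ = ((k.choose l : ℝ) * ((l + p).factorial : ℝ) * ((k - l + q).factorial : ℝ)) ^ (1 + α) := by
        rw [Real.mul_rpow (by positivity) hfb, Real.mul_rpow (by positivity) hfa]
    _ ≤ ((k + p + q).factorial : ℝ) ^ (1 + α) := by
        apply Real.rpow_le_rpow (by positivity) _ (by linarith)
        exact_mod_cast nat_key p q k l h

lemma basel_partial (m : ℕ) : ∑ l ∈ range m, (1:ℝ)/((l:ℝ)+1)^2 ≤ π^2/6 := by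
  have h : HasSum (fun n : ℕ => (1:ℝ)/((n:ℝ)+1)^2) (π^2/6) := by
    have h0 := hasSum_zeta_two
    have := (hasSum_nat_add_iff' (f := fun n : ℕ => (1:ℝ)/(n:ℝ)^2) 1).2 h0
    simpa using this
  exact sum_le_hasSum _ (fun i _ => by positivity) h

lemma sum_inv_sq (k : ℕ) :
    ∑ l ∈ range (k+1), 1/(((l:ℝ)+1)^2*(((k-l:ℕ):ℝ)+1)^2) ≤ (2*π^2/3) / ((k:ℝ)+1)^2 := by
  have key : ∀ l ∈ range (k+1), 1/(((l:ℝ)+1)^2*(((k-l:ℕ):ℝ)+1)^2) ≤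
      2/((k:ℝ)+2)^2 * (1/((l:ℝ)+1)^2 + 1/(((k-l:ℕ):ℝ)+1)^2) := by
    intro l hl
    rw [mem_range] at hl
    have hlk : l ≤ k := by omega
    have hc : ((k-l:ℕ):ℝ) = (k:ℝ) - (l:ℝ) := by
      rw [Nat.cast_sub hlk]
    set x : ℝ := (l:ℝ)+1 with hx
    set y : ℝ := ((k-l:ℕ):ℝ)+1 with hy
    have hxpos : 0 < x := by positivity
    have hypos : 0 < y := by positivity
    have hxy : x + y = (k:ℝ)+2 := by rw [hx, hy, hc]; ring
    have h1 : 1/(x^2*y^2) = (1/x + 1/y)^2 / ((k:ℝ)+2)^2 := by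
      rw [← hxy]; field_simp; ring
    rw [h1]
    have h2 : (1/x + 1/y)^2 ≤ 2*(1/x^2 + 1/y^2) := by
      rw [← one_div_pow, ← one_div_pow]
      nlinarith [sq_nonneg (1/x - 1/y)]
    have hk2 : (0:ℝ) < ((k:ℝ)+2)^2 := by positivity
    rw [div_le_iff₀ hk2]
    calc (1/x + 1/y)^2 ≤ 2*(1/x^2 + 1/y^2) := h2
      _ = 2/((k:ℝ)+2)^2 * (1/x^2 + 1/y^2) * ((k:ℝ)+2)^2 := by field_simp
  calc ∑ l ∈ range (k+1), 1/(((l:ℝ)+1)^2*(((k-l:ℕ):ℝ)+1)^2)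
      ≤ ∑ l ∈ range (k+1), 2/((k:ℝ)+2)^2 * (1/((l:ℝ)+1)^2 + 1/(((k-l:ℕ):ℝ)+1)^2) :=
        Finset.sum_le_sum key
    _ = 2/((k:ℝ)+2)^2 * ((∑ l ∈ range (k+1), 1/((l:ℝ)+1)^2) + ∑ l ∈ range (k+1), 1/(((k-l:ℕ):ℝ)+1)^2) := by
        rw [← Finset.mul_sum, Finset.sum_add_distrib]
    _ = 2/((k:ℝ)+2)^2 * ((∑ l ∈ range (k+1), 1/((l:ℝ)+1)^2) + ∑ l ∈ range (k+1), 1/((l:ℝ)+1)^2) := by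
        congr 2
        rw [← Finset.sum_range_reflect (fun l => 1/((l:ℝ)+1)^2) (k+1)]
        simp
    _ ≤ 2/((k:ℝ)+2)^2 * (π^2/6 + π^2/6) := by
        have := basel_partial (k+1)
        have hpos : (0:ℝ) ≤ 2/((k:ℝ)+2)^2 := by positivity
        gcongr
    _ ≤ (2*π^2/3) / ((k:ℝ)+1)^2 := by
        rw [div_mul_eq_mul_div, div_le_div_iff₀ (by positivity) (by positivity)]
        nlinarith [sq_nonneg π, (Nat.cast_nonneg k : (0:ℝ) ≤ k), pi_pos]

open Real in
theorem stmt_17 (n : ℕ) (α : ℝ) (hα : 0 < α) (p q : ℕ)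
    (A B : ℝ → (EuclideanSpace ℂ (Fin n) →L[ℂ] EuclideanSpace ℂ (Fin n)))
    (hA : ContDiff ℝ (⊤ : ℕ∞) A) (hB : ContDiff ℝ (⊤ : ℕ∞) B)
    (a₁ a₂ b₁ b₂ : ℝ → ℝ)
    (ha₁ : ∀ s, 0 ≤ a₁ s) (ha₂ : ∀ s, 0 ≤ a₂ s)
    (hb₁ : ∀ s, 0 ≤ b₁ s) (hb₂ : ∀ s, 0 ≤ b₂ s)
    (hAk : ∀ k : ℕ, ∀ s ∈ Set.Icc (0:ℝ) 1,
      ‖iteratedDeriv k A s‖ ≤ a₁ s * a₂ s ^ k * ((k + p).factorial : ℝ) ^ (1 + α) / ((k : ℝ) + 1) ^ 2)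
    (hBk : ∀ k : ℕ, ∀ s ∈ Set.Icc (0:ℝ) 1,
      ‖iteratedDeriv k B s‖ ≤ b₁ s * b₂ s ^ k * ((k + q).factorial : ℝ) ^ (1 + α) / ((k : ℝ) + 1) ^ 2) :
    ∀ k : ℕ, ∀ s ∈ Set.Icc (0:ℝ) 1,
      ‖iteratedDeriv k (fun t => A t * B t) s‖ ≤
        (4 * π ^ 2 / 3) * (a₁ s * b₁ s) * max (a₂ s) (b₂ s) ^ k *
          ((k + p + q).factorial : ℝ) ^ (1 + α) / ((k : ℝ) + 1) ^ 2 := by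
  intro k s hs
  set M : ℝ := max (a₂ s) (b₂ s) with hMdef
  have hM0 : 0 ≤ M := le_trans (ha₂ s) (le_max_left _ _)
  set N : ℝ := ((k + p + q).factorial : ℝ) ^ (1 + α) with hNdef
  have hN0 : 0 ≤ N := Real.rpow_nonneg (Nat.cast_nonneg _) _
  set D : ℝ := a₁ s * b₁ s * M ^ k * N with hDdef
  have hD0 : 0 ≤ D :=
    mul_nonneg (mul_nonneg (mul_nonneg (ha₁ s) (hb₁ s)) (pow_nonneg hM0 k)) hN0
  have hleib : ‖iteratedDeriv k (fun t => A t * B t) s‖ ≤ ∑ i ∈ Finset.range (k + 1),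
      (k.choose i : ℝ) * ‖iteratedDeriv i A s‖ * ‖iteratedDeriv (k - i) B s‖ := by
    rw [← norm_iteratedFDeriv_eq_norm_iteratedDeriv]
    simp_rw [← norm_iteratedFDeriv_eq_norm_iteratedDeriv]
    exact norm_iteratedFDeriv_mul_le hA hB s (by exact_mod_cast le_top)
  have hterm : ∀ i ∈ Finset.range (k+1),
      (k.choose i : ℝ) * ‖iteratedDeriv i A s‖ * ‖iteratedDeriv (k - i) B s‖ ≤
      D * (1/(((i:ℝ)+1)^2*(((k-i:ℕ):ℝ)+1)^2)) := by
    intro i hi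
    rw [Finset.mem_range] at hi
    have hik : i ≤ k := by omega
    have h1 := hAk i s hs
    have h2 := hBk (k - i) s hs
    have hC : (0:ℝ) ≤ (k.choose i : ℝ) := Nat.cast_nonneg _
    have hFa : (0:ℝ) ≤ ((i + p).factorial : ℝ) ^ (1 + α) := Real.rpow_nonneg (Nat.cast_nonneg _) _
    have hFb : (0:ℝ) ≤ ((k - i + q).factorial : ℝ) ^ (1 + α) := Real.rpow_nonneg (Nat.cast_nonneg _) _
    have hX : (((i:ℝ)+1)^2) ≠ 0 := by positivity
    have hY : ((((k-i:ℕ):ℝ)+1)^2) ≠ 0 := by positivity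
    have hboundA : 0 ≤ a₁ s * a₂ s ^ i * ((i + p).factorial : ℝ) ^ (1 + α) / ((i : ℝ) + 1) ^ 2 := by
      apply div_nonneg _ (by positivity)
      exact mul_nonneg (mul_nonneg (ha₁ s) (pow_nonneg (ha₂ s) i)) hFa
    have key1 : (k.choose i : ℝ) * ((i + p).factorial : ℝ) ^ (1 + α)
        * ((k - i + q).factorial : ℝ) ^ (1 + α) ≤ N :=
      rpow_key α hα.le p q k i hik
    have key2 : a₂ s ^ i * b₂ s ^ (k - i) ≤ M ^ k := by
      have h1' : a₂ s ^ i ≤ M ^ i := pow_le_pow_left₀ (ha₂ s) (le_max_left _ _) i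
      have h2' : b₂ s ^ (k - i) ≤ M ^ (k - i) := pow_le_pow_left₀ (hb₂ s) (le_max_right _ _) _
      calc a₂ s ^ i * b₂ s ^ (k - i) ≤ M ^ i * M ^ (k - i) :=
            mul_le_mul h1' h2' (pow_nonneg (hb₂ s) _) (pow_nonneg hM0 _)
        _ = M ^ k := by rw [← pow_add, Nat.add_sub_cancel' hik]
    calc (k.choose i : ℝ) * ‖iteratedDeriv i A s‖ * ‖iteratedDeriv (k - i) B s‖
        ≤ (k.choose i : ℝ) * (a₁ s * a₂ s ^ i * ((i + p).factorial : ℝ) ^ (1 + α) / ((i : ℝ) + 1) ^ 2)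
            * (b₁ s * b₂ s ^ (k - i) * ((k - i + q).factorial : ℝ) ^ (1 + α) / (((k - i : ℕ) : ℝ) + 1) ^ 2) :=
          mul_le_mul (mul_le_mul le_rfl h1 (norm_nonneg _) hC) h2 (norm_nonneg _)
            (mul_nonneg hC hboundA)
      _ = ((k.choose i : ℝ) * ((i + p).factorial : ℝ) ^ (1 + α) * ((k - i + q).factorial : ℝ) ^ (1 + α))
            * (a₂ s ^ i * b₂ s ^ (k - i)) * (a₁ s * b₁ s)
            * (1/(((i:ℝ)+1)^2*(((k-i:ℕ):ℝ)+1)^2)) := by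
          field_simp
      _ ≤ (N * M ^ k) * (a₁ s * b₁ s) * (1/(((i:ℝ)+1)^2*(((k-i:ℕ):ℝ)+1)^2)) := by
          refine mul_le_mul_of_nonneg_right ?_ (by positivity)
          refine mul_le_mul_of_nonneg_right ?_ (mul_nonneg (ha₁ s) (hb₁ s))
          exact mul_le_mul key1 key2
            (mul_nonneg (pow_nonneg (ha₂ s) _) (pow_nonneg (hb₂ s) _)) hN0
      _ = D * (1/(((i:ℝ)+1)^2*(((k-i:ℕ):ℝ)+1)^2)) := by rw [hDdef]; ring
  calc ‖iteratedDeriv k (fun t => A t * B t) s‖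
      ≤ ∑ i ∈ Finset.range (k + 1),
        (k.choose i : ℝ) * ‖iteratedDeriv i A s‖ * ‖iteratedDeriv (k - i) B s‖ := hleib
    _ ≤ ∑ i ∈ Finset.range (k + 1), D * (1/(((i:ℝ)+1)^2*(((k-i:ℕ):ℝ)+1)^2)) :=
        Finset.sum_le_sum hterm
    _ = D * ∑ i ∈ Finset.range (k + 1), 1/(((i:ℝ)+1)^2*(((k-i:ℕ):ℝ)+1)^2) := by
        rw [Finset.mul_sum]
    _ ≤ D * ((2*π^2/3) / ((k:ℝ)+1)^2) :=
        mul_le_mul_of_nonneg_left (sum_inv_sq k) hD0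
    _ ≤ (4 * π ^ 2 / 3) * (a₁ s * b₁ s) * M ^ k * N / ((k : ℝ) + 1) ^ 2 := by
        rw [show (4 * π ^ 2 / 3) * (a₁ s * b₁ s) * M ^ k * N / ((k : ℝ) + 1) ^ 2
            = (a₁ s * b₁ s * M ^ k * N) * ((4*π^2/3) / ((k:ℝ)+1)^2) by ring]
        rw [hDdef]
        refine mul_le_mul_of_nonneg_left ?_ (hDdef ▸ hD0)
        gcongr
        nlinarith [sq_nonneg π]
end
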